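/- For any n ≥ 1, the commutator [D_i^n, x_j] equals δ_ij (n D_i^{n−1} + Σ_{k≠i} R_{n−1}(D_i, D_k) g P_ik) − (1 − δ_ij) R_{n−1}(D_i, D_j) g P_ij, where R_{n−1}(x,y) = Σ_{a+b=n−1} x^a y^b is the complete homogeneous symmetric polynomial (x^n − y^n)/(x − y). -/

import Mathlib

open Finset

noncomputable section

/-- The open set of points with pairwise distinct coordinates. -/
def Omega (N : ℕ) : Set (Fin N → ℝ) := {x | Function.Injective x}

/-- The coordinate-swap (transposition) operator `P_{ij}`. -/
def Pswap {N : ℕ} (i j : Fin N) (f : (Fin N → ℝ) → ℝ) : (Fin N → ℝ) → ℝ :=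
  fun x => f (x ∘ Equiv.swap i j)

/-- The difference operator `Δ_i = ∑_{j ≠ i} (x_i - x_j)⁻¹ (1 - P_{ij})`. -/
def Delta {N : ℕ} (i : Fin N) (f : (Fin N → ℝ) → ℝ) : (Fin N → ℝ) → ℝ :=
  fun x => ∑ j ∈ Finset.univ.erase i, (f x - f (x ∘ Equiv.swap i j)) / (x i - x j)

/-- The partial derivative operator `∂_i`. -/
def pd {N : ℕ} (i : Fin N) (f : (Fin N → ℝ) → ℝ) : (Fin N → ℝ) → ℝ :=
  fun x => fderiv ℝ f x (Pi.single i 1)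

/-- Multiplication by the `i`-th coordinate. -/
def xmul {N : ℕ} (i : Fin N) (f : (Fin N → ℝ) → ℝ) : (Fin N → ℝ) → ℝ :=
  fun x => x i * f x

/-- The Dunkl operator `D_i = ∂_i + g Δ_i`. -/
def Dunkl {N : ℕ} (g : ℝ) (i : Fin N) (f : (Fin N → ℝ) → ℝ) : (Fin N → ℝ) → ℝ :=
  fun x => pd i f x + g * Delta i f x

variable {N : ℕ}

lemma isOpen_Omega (N : ℕ) : IsOpen (Omega N) := by
  have h : Omega N = ⋂ p ∈ (Finset.univ.filter (fun p : Fin N × Fin N => p.1 ≠ p.2)),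
      {x : Fin N → ℝ | x p.1 ≠ x p.2} := by
    ext x
    simp only [Omega, Set.mem_setOf_eq, Set.mem_iInter, Finset.mem_filter, Finset.mem_univ,
      true_and, Function.Injective]
    constructor
    · intro hx p hp; exact fun h => hp (hx h)
    · intro hx a b hab
      by_contra h
      exact hx (a, b) h hab
  rw [h]
  exact isOpen_biInter_finset fun p _ =>
    isOpen_ne_fun (continuous_apply p.1) (continuous_apply p.2)

lemma swap_mem_Omega {x : Fin N → ℝ} (hx : x ∈ Omega N) (i j : Fin N) :
    x ∘ Equiv.swap i j ∈ Omega N :=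
  hx.comp (Equiv.swap i j).injective

lemma Omega_sub_ne {x : Fin N → ℝ} (hx : x ∈ Omega N) {i j : Fin N} (h : i ≠ j) :
    x i - x j ≠ 0 :=
  sub_ne_zero_of_ne (fun he => h (hx he))

/-- The swap as a continuous linear map. -/
def swapL (i j : Fin N) : (Fin N → ℝ) →L[ℝ] (Fin N → ℝ) :=
  ContinuousLinearMap.pi fun m => ContinuousLinearMap.proj (Equiv.swap i j m)

lemma swapL_apply (i j : Fin N) (x : Fin N → ℝ) : swapL i j x = x ∘ Equiv.swap i j := rfl

lemma Pswap_eq (i j : Fin N) (f : (Fin N → ℝ) → ℝ) : Pswap i j f = f ∘ swapL i j := rfl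

lemma Pswap_smooth {i j : Fin N} {f : (Fin N → ℝ) → ℝ}
    (hf : ContDiffOn ℝ (⊤ : ℕ∞) f (Omega N)) :
    ContDiffOn ℝ (⊤ : ℕ∞) (Pswap i j f) (Omega N) := by
  rw [Pswap_eq]
  exact hf.comp ((swapL i j).contDiff.contDiffOn) (fun x hx => swap_mem_Omega hx i j)

lemma pd_smooth {i : Fin N} {f : (Fin N → ℝ) → ℝ}
    (hf : ContDiffOn ℝ (⊤ : ℕ∞) f (Omega N)) :
    ContDiffOn ℝ (⊤ : ℕ∞) (pd i f) (Omega N) := by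
  intro x hx
  have hat : ContDiffAt ℝ (⊤ : ℕ∞) f x := hf.contDiffAt ((isOpen_Omega N).mem_nhds hx)
  have h1 : ContDiffAt ℝ (⊤ : ℕ∞) (fderiv ℝ f) x := hat.fderiv_right (by exact_mod_cast le_top)
  have h2 : ContDiffAt ℝ (⊤ : ℕ∞) (pd i f) x := by
    have := (ContinuousLinearMap.apply ℝ ℝ (Pi.single i 1 : Fin N → ℝ)).contDiff.contDiffAt.comp x h1
    exact this
  exact h2.contDiffWithinAt

lemma Delta_smooth {i : Fin N} {f : (Fin N → ℝ) → ℝ}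
    (hf : ContDiffOn ℝ (⊤ : ℕ∞) f (Omega N)) :
    ContDiffOn ℝ (⊤ : ℕ∞) (Delta i f) (Omega N) := by
  unfold Delta
  apply ContDiffOn.sum
  intro k hk
  apply ContDiffOn.div
  · exact hf.sub (Pswap_smooth hf)
  · exact ((contDiff_apply ℝ ℝ i).sub (contDiff_apply ℝ ℝ k)).contDiffOn
  · intro x hx
    exact Omega_sub_ne hx (Finset.ne_of_mem_erase hk).symm

lemma Dunkl_smooth {g : ℝ} {i : Fin N} {f : (Fin N → ℝ) → ℝ}
    (hf : ContDiffOn ℝ (⊤ : ℕ∞) f (Omega N)) :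
    ContDiffOn ℝ (⊤ : ℕ∞) (Dunkl g i f) (Omega N) := by
  unfold Dunkl
  exact (pd_smooth hf).add (contDiffOn_const.mul (Delta_smooth hf))

lemma Dunkl_iter_smooth {g : ℝ} {i : Fin N} {f : (Fin N → ℝ) → ℝ} (n : ℕ)
    (hf : ContDiffOn ℝ (⊤ : ℕ∞) f (Omega N)) :
    ContDiffOn ℝ (⊤ : ℕ∞) ((Dunkl g i)^[n] f) (Omega N) := by
  induction n with
  | zero => exact hf
  | succ n ih => rw [Function.iterate_succ_apply']; exact Dunkl_smooth ih

lemma xmul_smooth {j : Fin N} {f : (Fin N → ℝ) → ℝ}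
    (hf : ContDiffOn ℝ (⊤ : ℕ∞) f (Omega N)) :
    ContDiffOn ℝ (⊤ : ℕ∞) (xmul j f) (Omega N) :=
  (contDiff_apply ℝ ℝ j).contDiffOn.mul hf

lemma diffAt_of_smooth {f : (Fin N → ℝ) → ℝ}
    (hf : ContDiffOn ℝ (⊤ : ℕ∞) f (Omega N)) {x : Fin N → ℝ} (hx : x ∈ Omega N) :
    DifferentiableAt ℝ f x :=
  (hf.contDiffAt ((isOpen_Omega N).mem_nhds hx)).differentiableAt (by simp)

lemma Dunkl_congr {g : ℝ} {i : Fin N} {h1 h2 : (Fin N → ℝ) → ℝ}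
    (h : ∀ y ∈ Omega N, h1 y = h2 y) {x : Fin N → ℝ} (hx : x ∈ Omega N) :
    Dunkl g i h1 x = Dunkl g i h2 x := by
  have hev : h1 =ᶠ[nhds x] h2 :=
    Filter.eventuallyEq_of_mem ((isOpen_Omega N).mem_nhds hx) h
  unfold Dunkl pd Delta
  rw [hev.fderiv_eq]
  congr 2
  apply Finset.sum_congr rfl
  intro k _
  rw [h x hx, h _ (swap_mem_Omega hx i k)]

lemma Dunkl_iter_congr {g : ℝ} {i : Fin N} {h1 h2 : (Fin N → ℝ) → ℝ} (n : ℕ)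
    (h : ∀ y ∈ Omega N, h1 y = h2 y) {x : Fin N → ℝ} (hx : x ∈ Omega N) :
    (Dunkl g i)^[n] h1 x = (Dunkl g i)^[n] h2 x := by
  induction n generalizing x with
  | zero => exact h x hx
  | succ n ih =>
    rw [Function.iterate_succ_apply', Function.iterate_succ_apply']
    exact Dunkl_congr (fun y hy => ih hy) hx

lemma Dunkl_add {g : ℝ} {i : Fin N} {h1 h2 : (Fin N → ℝ) → ℝ} {x : Fin N → ℝ}
    (d1 : DifferentiableAt ℝ h1 x) (d2 : DifferentiableAt ℝ h2 x) :
    Dunkl g i (fun y => h1 y + h2 y) x = Dunkl g i h1 x + Dunkl g i h2 x := by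
  unfold Dunkl pd Delta
  rw [fderiv_fun_add d1 d2]
  simp only [ContinuousLinearMap.add_apply]
  have : (∑ k ∈ Finset.univ.erase i,
      (h1 x + h2 x - (h1 (x ∘ Equiv.swap i k) + h2 (x ∘ Equiv.swap i k))) / (x i - x k)) =
      (∑ k ∈ Finset.univ.erase i, (h1 x - h1 (x ∘ Equiv.swap i k)) / (x i - x k)) +
      (∑ k ∈ Finset.univ.erase i, (h2 x - h2 (x ∘ Equiv.swap i k)) / (x i - x k)) := by
    rw [← Finset.sum_add_distrib]
    apply Finset.sum_congr rfl
    intro k _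
    rw [← add_div]
    congr 1
    ring
  rw [this]
  ring

lemma Dunkl_const_mul {g : ℝ} {i : Fin N} {h : (Fin N → ℝ) → ℝ} {x : Fin N → ℝ} (c : ℝ)
    (d : DifferentiableAt ℝ h x) :
    Dunkl g i (fun y => c * h y) x = c * Dunkl g i h x := by
  unfold Dunkl pd Delta
  rw [fderiv_const_mul d]
  simp only [ContinuousLinearMap.smul_apply, smul_eq_mul]
  have : (∑ k ∈ Finset.univ.erase i,
      (c * h x - c * h (x ∘ Equiv.swap i k)) / (x i - x k)) =
      c * ∑ k ∈ Finset.univ.erase i, (h x - h (x ∘ Equiv.swap i k)) / (x i - x k) := by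
    rw [Finset.mul_sum]
    apply Finset.sum_congr rfl
    intro k _
    rw [← mul_div_assoc]
    congr 1
    ring
  rw [this]
  ring

lemma Dunkl_sum {g : ℝ} {i : Fin N} {α : Type*} (s : Finset α)
    (F : α → (Fin N → ℝ) → ℝ) {x : Fin N → ℝ}
    (d : ∀ a ∈ s, DifferentiableAt ℝ (F a) x) :
    Dunkl g i (fun y => ∑ a ∈ s, F a y) x = ∑ a ∈ s, Dunkl g i (F a) x := by
  unfold Dunkl pd Delta
  rw [fderiv_fun_sum d]
  simp only [ContinuousLinearMap.sum_apply]
  rw [Finset.sum_add_distrib]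
  congr 1
  simp only [Finset.mul_sum]
  rw [Finset.sum_comm]
  apply Finset.sum_congr rfl
  intro k _
  rw [← Finset.sum_sub_distrib, Finset.sum_div, Finset.mul_sum]

lemma pd_xmul {i j : Fin N} {f : (Fin N → ℝ) → ℝ} {x : Fin N → ℝ}
    (d : DifferentiableAt ℝ f x) :
    pd i (xmul j f) x = (if i = j then f x else 0) + x j * pd i f x := by
  unfold pd xmul
  have dj : DifferentiableAt ℝ (fun y : Fin N → ℝ => y j) x :=
    (ContinuousLinearMap.proj j : (Fin N → ℝ) →L[ℝ] ℝ).differentiableAt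
  have : fderiv ℝ (fun y : Fin N → ℝ => y j * f y) x =
      (fun y : Fin N → ℝ => y j) x • fderiv ℝ f x +
      f x • fderiv ℝ (fun y : Fin N → ℝ => y j) x := fderiv_mul dj d
  rw [this]
  have hproj : fderiv ℝ (fun y : Fin N → ℝ => y j) x =
      (ContinuousLinearMap.proj j : (Fin N → ℝ) →L[ℝ] ℝ) :=
    (ContinuousLinearMap.proj j : (Fin N → ℝ) →L[ℝ] ℝ).fderiv
  rw [hproj]
  simp only [ContinuousLinearMap.add_apply, ContinuousLinearMap.smul_apply, smul_eq_mul,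
    ContinuousLinearMap.proj_apply]
  rw [Pi.single_apply]
  by_cases h : i = j
  · subst h; simp; try ring
  · simp [h, Ne.symm h]; try ring

lemma Delta_xmul {i j : Fin N} {f : (Fin N → ℝ) → ℝ} {x : Fin N → ℝ} (hx : x ∈ Omega N) :
    Delta i (xmul j f) x = x j * Delta i f x +
      (if i = j then ∑ k ∈ Finset.univ.erase i, Pswap i k f x else -(Pswap i j f x)) := by
  unfold Delta xmul Pswap
  by_cases h : i = j
  · subst h
    simp only [if_pos rfl]
    have : ∀ k ∈ Finset.univ.erase i,
        (x i * f x - (x ∘ Equiv.swap i k) i * f (x ∘ Equiv.swap i k)) / (x i - x k) =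
        x i * ((f x - f (x ∘ Equiv.swap i k)) / (x i - x k)) + f (x ∘ Equiv.swap i k) := by
      intro k hk
      have hki : k ≠ i := Finset.ne_of_mem_erase hk
      have hd : x i - x k ≠ 0 := Omega_sub_ne hx (Ne.symm hki)
      have : (x ∘ Equiv.swap i k) i = x k := by
        simp [Function.comp, Equiv.swap_apply_left]
      rw [this]
      field_simp
      try ring
    rw [Finset.sum_congr rfl this, Finset.sum_add_distrib, ← Finset.mul_sum]
    simp
  · simp only [if_neg h]
    have hji : j ∈ Finset.univ.erase i := Finset.mem_erase.2 ⟨fun hh => h hh.symm, Finset.mem_univ j⟩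
    have : ∀ k ∈ Finset.univ.erase i,
        (x j * f x - (x ∘ Equiv.swap i k) j * f (x ∘ Equiv.swap i k)) / (x i - x k) =
        x j * ((f x - f (x ∘ Equiv.swap i k)) / (x i - x k)) +
          (if k = j then -(f (x ∘ Equiv.swap i j)) else 0) := by
      intro k hk
      have hki : k ≠ i := Finset.ne_of_mem_erase hk
      have hd : x i - x k ≠ 0 := Omega_sub_ne hx (Ne.symm hki)
      by_cases hkj : k = j
      · subst hkj
        have : (x ∘ Equiv.swap i k) k = x i := by
          simp [Function.comp, Equiv.swap_apply_right]
        rw [this, if_pos rfl]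
        field_simp
        ring
      · have : (x ∘ Equiv.swap i k) j = x j := by
          simp [Function.comp, Equiv.swap_apply_of_ne_of_ne (Ne.symm h) (Ne.symm hkj)]
        rw [this, if_neg hkj]
        field_simp
        ring
    rw [Finset.sum_congr rfl this, Finset.sum_add_distrib, ← Finset.mul_sum,
      Finset.sum_ite_eq' (Finset.univ.erase i) j, if_pos hji]

lemma Dunkl_xmul {g : ℝ} {i j : Fin N} {f : (Fin N → ℝ) → ℝ}
    (hf : ContDiffOn ℝ (⊤ : ℕ∞) f (Omega N)) {x : Fin N → ℝ} (hx : x ∈ Omega N) :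
    Dunkl g i (xmul j f) x = x j * Dunkl g i f x +
      (if i = j then f x + g * ∑ k ∈ Finset.univ.erase i, Pswap i k f x
       else -(g * Pswap i j f x)) := by
  unfold Dunkl
  rw [pd_xmul (diffAt_of_smooth hf hx), Delta_xmul hx]
  by_cases h : i = j
  · simp only [if_pos h]; ring
  · simp only [if_neg h]; ring

lemma single_comp_swap {i k : Fin N} (hik : k ≠ i) :
    (swapL i k) (Pi.single k (1:ℝ)) = Pi.single i 1 := by
  funext m
  simp only [swapL, ContinuousLinearMap.pi_apply, ContinuousLinearMap.proj_apply]
  rcases eq_or_ne m i with rfl | hmi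
  · rw [Equiv.swap_apply_left]
    simp
  · rcases eq_or_ne m k with rfl | hmk
    · rw [Equiv.swap_apply_right]
      simp [hik, Ne.symm hmi]
    · rw [Equiv.swap_apply_of_ne_of_ne hmi hmk]
      simp [hmk, hmi]

lemma pd_Pswap {i k : Fin N} (hik : k ≠ i) {h : (Fin N → ℝ) → ℝ} {x : Fin N → ℝ}
    (dh : DifferentiableAt ℝ h (x ∘ Equiv.swap i k)) :
    pd k (Pswap i k h) x = pd i h (x ∘ Equiv.swap i k) := by
  unfold pd
  have hL : (swapL i k) x = x ∘ Equiv.swap i k := rfl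
  have : fderiv ℝ (Pswap i k h) x = (fderiv ℝ h ((swapL i k) x)).comp (swapL i k) := by
    rw [Pswap_eq]
    rw [fderiv_comp x (by rw [hL]; exact dh) (swapL i k).differentiableAt,
      (swapL i k).fderiv]
  rw [this]
  rw [ContinuousLinearMap.comp_apply, single_comp_swap hik, hL]

lemma Delta_Pswap {i k : Fin N} (hik : k ≠ i) {h : (Fin N → ℝ) → ℝ} {x : Fin N → ℝ} :
    Delta k (Pswap i k h) x = Delta i h (x ∘ Equiv.swap i k) := by
  unfold Delta Pswap
  symm
  apply Finset.sum_nbij' (fun m => Equiv.swap i k m) (fun m => Equiv.swap i k m)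
  · intro m hm
    have hmi : m ≠ i := Finset.ne_of_mem_erase hm
    refine Finset.mem_erase.2 ⟨?_, Finset.mem_univ _⟩
    intro he
    apply hmi
    have := congrArg (Equiv.swap i k) he
    rwa [Equiv.swap_apply_self, Equiv.swap_apply_right] at this
  · intro m hm
    have hmk : m ≠ k := Finset.ne_of_mem_erase hm
    refine Finset.mem_erase.2 ⟨?_, Finset.mem_univ _⟩
    intro he
    apply hmk
    have := congrArg (Equiv.swap i k) he
    rwa [Equiv.swap_apply_self, Equiv.swap_apply_left] at this
  · intro m _; exact Equiv.swap_apply_self _ _ _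
  · intro m _; exact Equiv.swap_apply_self _ _ _
  · intro m hm
    set σ := Equiv.swap i k
    have h1 : (x ∘ σ) i = x k := by simp [σ, Function.comp, Equiv.swap_apply_left]
    have h2 : (x ∘ σ) m = x (σ m) := rfl
    have h3 : (x ∘ σ) ∘ (Equiv.swap i m) = (x ∘ Equiv.swap k (σ m)) ∘ σ := by
      funext t
      show x (σ (Equiv.swap i m t)) = x (Equiv.swap k (σ m) (σ t))
      congr 1
      have hconj : Equiv.swap k (σ m) = σ * Equiv.swap i m * σ⁻¹ := by
        have := Equiv.swap_apply_apply σ i m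
        rwa [show σ i = k from Equiv.swap_apply_left i k] at this
      rw [hconj]
      simp [Equiv.Perm.mul_apply, Equiv.swap_inv, Equiv.swap_apply_self, σ]
    rw [h1, h2, h3]

lemma Pswap_Dunkl {g : ℝ} {i k : Fin N} (hik : k ≠ i) {h : (Fin N → ℝ) → ℝ}
    (hh : ContDiffOn ℝ (⊤ : ℕ∞) h (Omega N)) {x : Fin N → ℝ} (hx : x ∈ Omega N) :
    Pswap i k (Dunkl g i h) x = Dunkl g k (Pswap i k h) x := by
  have hy : x ∘ Equiv.swap i k ∈ Omega N := swap_mem_Omega hx i k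
  show Dunkl g i h (x ∘ Equiv.swap i k) = Dunkl g k (Pswap i k h) x
  unfold Dunkl
  rw [pd_Pswap hik (diffAt_of_smooth hh hy), Delta_Pswap hik]

lemma Pswap_Dunkl_iter {g : ℝ} {i k : Fin N} (hik : k ≠ i) {h : (Fin N → ℝ) → ℝ}
    (hh : ContDiffOn ℝ (⊤ : ℕ∞) h (Omega N)) (n : ℕ) {x : Fin N → ℝ} (hx : x ∈ Omega N) :
    Pswap i k ((Dunkl g i)^[n] h) x = (Dunkl g k)^[n] (Pswap i k h) x := by
  induction n generalizing x with
  | zero => rfl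
  | succ n ih =>
    rw [Function.iterate_succ_apply', Function.iterate_succ_apply']
    rw [Pswap_Dunkl hik (Dunkl_iter_smooth n hh) hx]
    exact Dunkl_congr (fun y hy => ih hy) hx

lemma key {g : ℝ} {i j : Fin N} {f : (Fin N → ℝ) → ℝ}
    (hf : ContDiffOn ℝ (⊤ : ℕ∞) f (Omega N)) (n : ℕ) (hn : 1 ≤ n) :
    ∀ x ∈ Omega N, (Dunkl g i)^[n] (xmul j f) x = x j * (Dunkl g i)^[n] f x +
      (if i = j then
        (n : ℝ) * (Dunkl g i)^[n - 1] f x +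
          g * ∑ k ∈ Finset.univ.erase i, ∑ a ∈ Finset.range n,
            (Dunkl g i)^[a] ((Dunkl g k)^[n - 1 - a] (Pswap i k f)) x
      else
        -(g * ∑ a ∈ Finset.range n,
            (Dunkl g i)^[a] ((Dunkl g j)^[n - 1 - a] (Pswap i j f)) x)) := by
  induction n, hn using Nat.le_induction with
  | base =>
    intro x hx
    simp only [Function.iterate_one, Nat.sub_self, Finset.sum_range_one,
      Function.iterate_zero, id_eq, Nat.cast_one, one_mul]
    rw [Dunkl_xmul hf hx]
  | succ n hn ih =>
    intro x hx
    have hD : ∀ m : ℕ, ContDiffOn ℝ (⊤ : ℕ∞) ((Dunkl g i)^[m] f) (Omega N) :=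
      fun m => Dunkl_iter_smooth m hf
    have hDh : Dunkl g i ((Dunkl g i)^[n] f) = (Dunkl g i)^[n + 1] f :=
      (Function.iterate_succ_apply' (Dunkl g i) n f).symm
    have hDn1 : Dunkl g i ((Dunkl g i)^[n - 1] f) = (Dunkl g i)^[n] f := by
      conv_rhs => rw [show n = n - 1 + 1 by omega]
      rw [Function.iterate_succ_apply']
    have hterm : ∀ (k : Fin N) (a b : ℕ), ContDiffOn ℝ (⊤ : ℕ∞)
        ((Dunkl g i)^[a] ((Dunkl g k)^[b] (Pswap i k f))) (Omega N) :=
      fun k a b => Dunkl_iter_smooth a (Dunkl_iter_smooth b (Pswap_smooth hf))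
    have hiterD : ∀ (k : Fin N) (a b : ℕ),
        Dunkl g i ((Dunkl g i)^[a] ((Dunkl g k)^[b] (Pswap i k f))) =
        (Dunkl g i)^[a + 1] ((Dunkl g k)^[b] (Pswap i k f)) :=
      fun k a b => (Function.iterate_succ_apply' (Dunkl g i) a _).symm
    rcases eq_or_ne i j with hij | hij
    · subst hij
      simp only [if_pos rfl, if_true, eq_self_iff_true] at ih ⊢
      have hS : ContDiffOn ℝ (⊤ : ℕ∞) (fun y => ∑ k ∈ Finset.univ.erase i,
          ∑ a ∈ Finset.range n, (Dunkl g i)^[a] ((Dunkl g k)^[n - 1 - a] (Pswap i k f)) y)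
          (Omega N) :=
        ContDiffOn.sum fun k _ => ContDiffOn.sum fun a _ => hterm k a (n - 1 - a)
      have hE : ContDiffOn ℝ (⊤ : ℕ∞) (fun y => (n : ℝ) * (Dunkl g i)^[n - 1] f y +
          g * ∑ k ∈ Finset.univ.erase i, ∑ a ∈ Finset.range n,
            (Dunkl g i)^[a] ((Dunkl g k)^[n - 1 - a] (Pswap i k f)) y) (Omega N) :=
        (contDiffOn_const.mul (hD (n - 1))).add (contDiffOn_const.mul hS)
      have step1 : (Dunkl g i)^[n + 1] (xmul i f) x =
          Dunkl g i (fun y => xmul i ((Dunkl g i)^[n] f) y +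
            ((n : ℝ) * (Dunkl g i)^[n - 1] f y +
              g * ∑ k ∈ Finset.univ.erase i, ∑ a ∈ Finset.range n,
                (Dunkl g i)^[a] ((Dunkl g k)^[n - 1 - a] (Pswap i k f)) y)) x := by
        rw [Function.iterate_succ_apply']
        exact Dunkl_congr (fun y hy => ih y hy) hx
      rw [step1,
        Dunkl_add (diffAt_of_smooth (xmul_smooth (hD n)) hx) (diffAt_of_smooth hE hx),
        Dunkl_add (diffAt_of_smooth (contDiffOn_const.mul (hD (n - 1))) hx)
          (diffAt_of_smooth (contDiffOn_const.mul hS) hx),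
        Dunkl_xmul (hD n) hx, if_pos rfl,
        Dunkl_const_mul (n : ℝ) (diffAt_of_smooth (hD (n - 1)) hx),
        Dunkl_const_mul g (diffAt_of_smooth hS hx),
        Dunkl_sum (Finset.univ.erase i) _
          (fun k _ => diffAt_of_smooth (ContDiffOn.sum fun a _ => hterm k a (n - 1 - a)) hx),
        hDh, hDn1]
      have hsum2 : ∀ k ∈ Finset.univ.erase i,
          Dunkl g i (fun y => ∑ a ∈ Finset.range n,
              (Dunkl g i)^[a] ((Dunkl g k)^[n - 1 - a] (Pswap i k f)) y) x =
          ∑ a ∈ Finset.range n,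
            (Dunkl g i)^[a + 1] ((Dunkl g k)^[n - 1 - a] (Pswap i k f)) x := by
        intro k _
        rw [Dunkl_sum (Finset.range n) _
          (fun a _ => diffAt_of_smooth (hterm k a (n - 1 - a)) hx)]
        exact Finset.sum_congr rfl fun a _ => by rw [hiterD]
      rw [Finset.sum_congr rfl hsum2]
      have hPsw : ∀ k ∈ Finset.univ.erase i,
          Pswap i k ((Dunkl g i)^[n] f) x = (Dunkl g k)^[n] (Pswap i k f) x :=
        fun k hk => Pswap_Dunkl_iter (Finset.ne_of_mem_erase hk) hf n hx
      have hexp : ∀ k ∈ Finset.univ.erase i,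
          ∑ a ∈ Finset.range (n + 1),
            (Dunkl g i)^[a] ((Dunkl g k)^[n + 1 - 1 - a] (Pswap i k f)) x =
          (Dunkl g k)^[n] (Pswap i k f) x + ∑ a ∈ Finset.range n,
            (Dunkl g i)^[a + 1] ((Dunkl g k)^[n - 1 - a] (Pswap i k f)) x := by
        intro k _
        rw [Finset.sum_range_succ']
        simp only [Function.iterate_zero, id_eq, Nat.add_sub_cancel, Nat.sub_zero]
        rw [add_comm]
        congr 1
        refine Finset.sum_congr rfl fun a _ => ?_
        have hsub : n - (a + 1) = n - 1 - a := by omega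
        rw [hsub]
      rw [Finset.sum_congr rfl hPsw, Finset.sum_congr rfl hexp, Finset.sum_add_distrib]
      simp only [Nat.add_sub_cancel]
      push_cast
      ring
    · simp only [if_neg hij] at ih ⊢
      have hji : j ≠ i := Ne.symm hij
      have htermj : ∀ (a b : ℕ), ContDiffOn ℝ (⊤ : ℕ∞)
          ((Dunkl g i)^[a] ((Dunkl g j)^[b] (Pswap i j f))) (Omega N) :=
        fun a b => Dunkl_iter_smooth a (Dunkl_iter_smooth b (Pswap_smooth hf))
      have hS : ContDiffOn ℝ (⊤ : ℕ∞) (fun y => ∑ a ∈ Finset.range n,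
          (Dunkl g i)^[a] ((Dunkl g j)^[n - 1 - a] (Pswap i j f)) y) (Omega N) :=
        ContDiffOn.sum fun a _ => htermj a (n - 1 - a)
      have hE : ContDiffOn ℝ (⊤ : ℕ∞) (fun y => (-g) * ∑ a ∈ Finset.range n,
          (Dunkl g i)^[a] ((Dunkl g j)^[n - 1 - a] (Pswap i j f)) y) (Omega N) :=
        contDiffOn_const.mul hS
      have step1 : (Dunkl g i)^[n + 1] (xmul j f) x =
          Dunkl g i (fun y => xmul j ((Dunkl g i)^[n] f) y +
            (-g) * ∑ a ∈ Finset.range n,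
              (Dunkl g i)^[a] ((Dunkl g j)^[n - 1 - a] (Pswap i j f)) y) x := by
        rw [Function.iterate_succ_apply']
        refine Dunkl_congr (fun y hy => ?_) hx
        rw [ih y hy]
        simp only [xmul]
        ring
      rw [step1,
        Dunkl_add (diffAt_of_smooth (xmul_smooth (hD n)) hx) (diffAt_of_smooth hE hx),
        Dunkl_xmul (hD n) hx, if_neg hij,
        Dunkl_const_mul (-g) (diffAt_of_smooth hS hx),
        Dunkl_sum (Finset.range n) _
          (fun a _ => diffAt_of_smooth (htermj a (n - 1 - a)) hx),
        hDh]
      have hPsw : Pswap i j ((Dunkl g i)^[n] f) x = (Dunkl g j)^[n] (Pswap i j f) x :=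
        Pswap_Dunkl_iter hji hf n hx
      have hexp : ∑ a ∈ Finset.range (n + 1),
            (Dunkl g i)^[a] ((Dunkl g j)^[n + 1 - 1 - a] (Pswap i j f)) x =
          (Dunkl g j)^[n] (Pswap i j f) x + ∑ a ∈ Finset.range n,
            (Dunkl g i)^[a + 1] ((Dunkl g j)^[n - 1 - a] (Pswap i j f)) x := by
        rw [Finset.sum_range_succ']
        simp only [Function.iterate_zero, id_eq, Nat.add_sub_cancel, Nat.sub_zero]
        rw [add_comm]
        congr 1
        refine Finset.sum_congr rfl fun a _ => ?_
        have hsub : n - (a + 1) = n - 1 - a := by omega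
        rw [hsub]
      rw [hexp, hPsw]
      rw [Finset.sum_congr rfl (fun a (_ : a ∈ Finset.range n) => by rw [hiterD j a (n - 1 - a)])]
      ring

theorem Dunkl_pow_xmul_commutator {N : ℕ} (g : ℝ) (n : ℕ) (hn : 1 ≤ n) (i j : Fin N)
    (f : (Fin N → ℝ) → ℝ) (hf : ContDiffOn ℝ (⊤ : ℕ∞) f (Omega N))
    (x : Fin N → ℝ) (hx : x ∈ Omega N) :
    (Dunkl g i)^[n] (xmul j f) x - x j * (Dunkl g i)^[n] f x =
      if i = j then
        (n : ℝ) * (Dunkl g i)^[n - 1] f x +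
          g * ∑ k ∈ Finset.univ.erase i, ∑ a ∈ Finset.range n,
            (Dunkl g i)^[a] ((Dunkl g k)^[n - 1 - a] (Pswap i k f)) x
      else
        -(g * ∑ a ∈ Finset.range n,
            (Dunkl g i)^[a] ((Dunkl g j)^[n - 1 - a] (Pswap i j f)) x) := by
  have hk := key (g := g) (i := i) (j := j) hf n hn x hx
  rw [hk]
  ring
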